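/- Let G be a graph in class 𝒜₁. Then for every graph H, γ(G □ H) ≥ (γ(G) − √γ(G))·γ(H). -/

import Mathlib

open Finset

/-- `S` dominates `T`: every vertex of `T` is in the closed neighborhood of `S`. -/
def Dominates {V : Type*} (G : SimpleGraph V) (S T : Set V) : Prop :=
  ∀ t ∈ T, ∃ s ∈ S, s = t ∨ G.Adj s t

/-- The domination number of a finite graph. -/
noncomputable def domNum {V : Type*} [Fintype V] (G : SimpleGraph V) : ℕ :=
  sInf {n | ∃ D : Finset V, D.card = n ∧ Dominates G ↑D Set.univ}

/-- A partition of the vertex set of `G` into `m` cliques. -/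
structure CliquePartition {V : Type*} (G : SimpleGraph V) (m : ℕ) where
  parts : Fin m → Finset V
  disj : ∀ i j, i ≠ j → Disjoint (parts i) (parts j)
  cover : ∀ v, ∃ i, v ∈ parts i
  clique : ∀ i, G.IsClique ↑(parts i)

/-- The clique covering number: minimum number of cliques partitioning `V(G)`. -/
noncomputable def cliqueCoverNum {V : Type*} [Fintype V] (G : SimpleGraph V) : ℕ :=
  sInf {m | Nonempty (CliquePartition G m)}

/-- The class `𝒟ₙ`: `θ(G) = γ(G) + n` and `G` is not a spanning subgraph
(with equal domination number) of a graph in `𝒟ₘ` for `m < n`. -/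
def InD {V : Type*} [Fintype V] (n : ℕ) (G : SimpleGraph V) : Prop :=
  cliqueCoverNum G = domNum G + n ∧
    ∀ m : ℕ, m < n → ∀ H : SimpleGraph V, G ≤ H → domNum G = domNum H → ¬ InD m H
termination_by n

/-- The class `𝒜ₙ`: spanning subgraphs (with equal domination number) of graphs in `𝒟ₙ`. -/
def InA {V : Type*} [Fintype V] (n : ℕ) (G : SimpleGraph V) : Prop :=
  ∃ H : SimpleGraph V, G ≤ H ∧ domNum G = domNum H ∧ InD n H

/-!
Replace `G` by a graph `K ⊇ G` of `𝒟₁` with the same domination number `k`: its vertices are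
partitioned into `k + 1` nonempty cliques. For `X ⊆ V` let `F(X)` be the set of cliques that `X`
dominates entirely. Adding one vertex per remaining clique to `X` dominates `K`, so
`|F(X)| ≤ |X| + 1`; call `X` tight when equality holds. Two tight sets have intersecting `F`.

Let `D` dominate `K □ H` and let `D_w ⊆ V` be its slice at height `w`. For each clique `Q`, the
heights `w` with `Q ∈ F(D_w)` dominate `H`, so double counting gives
`|S| γ(H) ≤ Σ_w |F(D_w) ∩ S|` for every set `S` of cliques. If some tight `X` has `|X| < √k`,
take `S = F(X)ᶜ`: every slice meets `S` in at most `|D_w|` cliques, whence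
`(k - |X|) γ(H) ≤ |D|`. Otherwise `√k |F(D_w)| ≤ (√k + 1) |D_w|` for every slice, and taking all
cliques gives `√k (k + 1) γ(H) ≤ (√k + 1) |D|`.
-/

open scoped Classical

section Domination

variable {V : Type*}

theorem Dominates.mono_graph {G K : SimpleGraph V} {S T : Set V} (hGK : G ≤ K)
    (h : Dominates G S T) : Dominates K S T := fun t ht =>
  let ⟨s, hs, hst⟩ := h t ht
  ⟨s, hs, hst.imp_right (@hGK _ _)⟩

theorem Dominates.mono_left {G : SimpleGraph V} {S S' T : Set V} (hS : S ⊆ S')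
    (h : Dominates G S T) : Dominates G S' T := fun t ht =>
  let ⟨s, hs, hst⟩ := h t ht
  ⟨s, hS hs, hst⟩

variable [Fintype V] {G : SimpleGraph V}

theorem exists_dominates_card_eq_domNum (G : SimpleGraph V) :
    ∃ D : Finset V, #D = domNum G ∧ Dominates G ↑D Set.univ :=
  show domNum G ∈ {n | ∃ D : Finset V, #D = n ∧ Dominates G ↑D Set.univ} from
    Nat.sInf_mem ⟨#(univ : Finset V), univ, rfl, fun t _ => ⟨t, by simp, Or.inl rfl⟩⟩

theorem domNum_le_card {D : Finset V} (h : Dominates G ↑D Set.univ) : domNum G ≤ #D :=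
  Nat.sInf_le ⟨D, rfl, h⟩

end Domination

theorem SimpleGraph.boxProd_mono_left {V W : Type*} {G K : SimpleGraph V} (hGK : G ≤ K)
    (H : SimpleGraph W) : G.boxProd H ≤ K.boxProd H := by
  intro a b hab
  rw [SimpleGraph.boxProd_adj] at hab ⊢
  exact hab.imp_left fun h => ⟨hGK h.1, h.2⟩

noncomputable def fiber {V W : Type*} (D : Finset (V × W)) (w : W) : Finset V :=
  (D.filter fun p => p.2 = w).image Prod.fst

theorem mem_fiber {V W : Type*} {D : Finset (V × W)} {w : W} {v : V} :
    v ∈ fiber D w ↔ (v, w) ∈ D := by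
  simp [fiber]

theorem sum_card_fiber_le {V W : Type*} [Fintype W] (D : Finset (V × W)) :
    ∑ w, #(fiber D w) ≤ #D := by
  rw [card_eq_sum_card_fiberwise fun p _ => mem_univ p.2]
  exact sum_le_sum fun _ _ => card_image_le

namespace CliquePartition

variable {V : Type*} {K : SimpleGraph V} {m : ℕ} (CP : CliquePartition K m)

theorem nonempty_cliqueCoverNum [Fintype V] (K : SimpleGraph V) :
    Nonempty (CliquePartition K (cliqueCoverNum K)) := by
  refine Nat.sInf_mem (s := {m | Nonempty (CliquePartition K m)})
    ⟨Fintype.card V, ⟨fun i => {(Fintype.equivFin V).symm i}, ?_, ?_, ?_⟩⟩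
  · intro i j hij
    simpa using fun e => hij ((Fintype.equivFin V).symm.injective e)
  · exact fun v => ⟨Fintype.equivFin V v, by simp⟩
  · simp

theorem parts_nonempty [Fintype V] (hm : m ≤ cliqueCoverNum K) (i : Fin m) :
    (CP.parts i).Nonempty := by
  obtain ⟨m, rfl⟩ := Nat.exists_eq_add_one_of_ne_zero i.pos.ne'
  rw [nonempty_iff_ne_empty]
  intro hi
  let CP' : CliquePartition K m :=
    { parts := fun j => CP.parts (i.succAbove j)
      disj := fun a b hab => CP.disj _ _ fun e => hab (Fin.succAbove_right_injective e)
      cover := fun v => by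
        obtain ⟨j, hj⟩ := CP.cover v
        have hji : j ≠ i := by rintro rfl; simp [hi] at hj
        obtain ⟨j', rfl⟩ := Fin.exists_succAbove_eq hji
        exact ⟨j', hj⟩
      clique := fun _ => CP.clique _ }
  have : cliqueCoverNum K ≤ m := Nat.sInf_le ⟨CP'⟩
  omega

theorem dominates_parts_of_mem {X : Set V} {v : V} {i : Fin m} (hvX : v ∈ X)
    (hvi : v ∈ CP.parts i) : Dominates K X ↑(CP.parts i) := fun u hu =>
  ⟨v, hvX, (eq_or_ne v u).imp_right (CP.clique i hvi hu)⟩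

noncomputable def fullParts (X : Finset V) : Finset (Fin m) :=
  univ.filter fun i => Dominates K ↑X ↑(CP.parts i)

theorem mem_fullParts {X : Finset V} {i : Fin m} :
    i ∈ CP.fullParts X ↔ Dominates K ↑X ↑(CP.parts i) := by
  simp [fullParts]

theorem fullParts_mono {X Y : Finset V} (h : X ⊆ Y) : CP.fullParts X ⊆ CP.fullParts Y :=
  fun _ hi => (CP.mem_fullParts).2 (((CP.mem_fullParts).1 hi).mono_left (coe_subset.2 h))

variable [Fintype V]

theorem card_fullParts_add_domNum_le (hne : ∀ i, (CP.parts i).Nonempty) (X : Finset V) :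
    #(CP.fullParts X) + domNum K ≤ #X + m := by
  choose r hr using hne
  set T := (CP.fullParts X)ᶜ.image r
  have hdom : Dominates K ↑(X ∪ T) Set.univ := by
    intro t _
    obtain ⟨i, hti⟩ := CP.cover t
    by_cases hi : i ∈ CP.fullParts X
    · exact ((CP.mem_fullParts.1 hi).mono_left (coe_subset.2 subset_union_left)) t hti
    · have hrT : r i ∈ X ∪ T := mem_union_right _ (mem_image_of_mem r (mem_compl.2 hi))
      exact CP.dominates_parts_of_mem (mem_coe.2 hrT) (hr i) t hti
  have hT : #T ≤ m - #(CP.fullParts X) := card_image_le.trans (by simp [card_compl])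
  have := (domNum_le_card hdom).trans (card_union_le X T)
  have : #(CP.fullParts X) ≤ m := by simpa using card_le_univ (CP.fullParts X)
  omega

theorem card_fullParts_le (hne : ∀ i, (CP.parts i).Nonempty) (hm : m = domNum K + 1)
    (X : Finset V) : #(CP.fullParts X) ≤ #X + 1 := by
  have := CP.card_fullParts_add_domNum_le hne X
  omega

-- Otherwise `X ∪ Y` would dominate `#X + #Y + 2` whole parts, against `card_fullParts_le`.
theorem fullParts_inter_nonempty (hne : ∀ i, (CP.parts i).Nonempty)
    (hm : m = domNum K + 1) {X Y : Finset V} (hX : #X < #(CP.fullParts X))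
    (hY : #Y < #(CP.fullParts Y)) : (CP.fullParts X ∩ CP.fullParts Y).Nonempty := by
  rw [← not_disjoint_iff_nonempty_inter]
  intro hdisj
  have hunion : #(CP.fullParts X) + #(CP.fullParts Y) ≤ #(CP.fullParts (X ∪ Y)) := by
    rw [← card_union_of_disjoint hdisj]
    exact card_le_card (union_subset (CP.fullParts_mono subset_union_left)
      (CP.fullParts_mono subset_union_right))
  have := CP.card_fullParts_le hne hm (X ∪ Y)
  have := card_union_le X Y
  omega

end CliquePartition

namespace CliquePartition

variable {V W : Type*} [Fintype W] {K : SimpleGraph V} {H : SimpleGraph W} {m : ℕ}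
  (CP : CliquePartition K m) {D : Finset (V × W)}

noncomputable def partDominators (D : Finset (V × W)) (i : Fin m) : Finset W :=
  univ.filter fun w => i ∈ CP.fullParts (fiber D w)

theorem dominates_partDominators (hD : Dominates (K.boxProd H) ↑D Set.univ) (i : Fin m) :
    Dominates H ↑(CP.partDominators D i) Set.univ := by
  intro w _
  by_cases hw : i ∈ CP.fullParts (fiber D w)
  · exact ⟨w, by simp [partDominators, hw], Or.inl rfl⟩
  obtain ⟨v, hv, hvw⟩ : ∃ v ∈ CP.parts i, ∀ x ∈ fiber D w, ¬(x = v ∨ K.Adj x v) := by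
    simpa [mem_fullParts, Dominates] using hw
  obtain ⟨⟨x, y⟩, hxy, hadj⟩ := hD (v, w) trivial
  rcases hadj with h | h
  · obtain ⟨rfl, rfl⟩ := Prod.mk.inj h
    exact absurd (Or.inl rfl) (hvw x (mem_fiber.2 hxy))
  rcases SimpleGraph.boxProd_adj.1 h with ⟨hK, rfl⟩ | ⟨hH, rfl⟩
  · exact absurd (Or.inr hK) (hvw x (mem_fiber.2 hxy))
  · have hy : y ∈ CP.partDominators D i := by
      simpa [partDominators, mem_fullParts] using
        CP.dominates_parts_of_mem (mem_coe.2 (mem_fiber.2 hxy)) hv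
    exact ⟨y, hy, Or.inr hH⟩

theorem card_mul_domNum_le (hD : Dominates (K.boxProd H) ↑D Set.univ) (S : Finset (Fin m)) :
    #S * domNum H ≤ ∑ w, #(CP.fullParts (fiber D w) ∩ S) :=
  calc #S * domNum H = ∑ _i ∈ S, domNum H := by rw [sum_const, smul_eq_mul]
    _ ≤ ∑ i ∈ S, #(CP.partDominators D i) :=
      sum_le_sum fun i _ => domNum_le_card (CP.dominates_partDominators hD i)
    _ = ∑ w, #(CP.fullParts (fiber D w) ∩ S) := by
      refine (sum_card_bipartiteAbove_eq_sum_card_bipartiteBelow (s := S) (t := univ)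
        (r := fun i w => i ∈ CP.fullParts (fiber D w))).trans (sum_congr rfl fun w _ => ?_)
      rw [bipartiteBelow, filter_mem_eq_inter, inter_comm]

variable [Fintype V]

theorem card_fullParts_sdiff_le (hne : ∀ i, (CP.parts i).Nonempty) (hm : m = domNum K + 1)
    {X : Finset V} (hX : #X < #(CP.fullParts X)) (Y : Finset V) :
    #(CP.fullParts Y \ CP.fullParts X) ≤ #Y := by
  have hsplit := card_sdiff_add_card_inter (CP.fullParts Y) (CP.fullParts X)
  have hY := CP.card_fullParts_le hne hm Y
  by_cases htight : #Y < #(CP.fullParts Y)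
  · have := card_pos.2 (CP.fullParts_inter_nonempty hne hm htight hX)
    omega
  · omega

theorem sub_card_mul_domNum_le_card (hne : ∀ i, (CP.parts i).Nonempty)
    (hm : m = domNum K + 1) (hD : Dominates (K.boxProd H) ↑D Set.univ) {X : Finset V}
    (hX : #X < #(CP.fullParts X)) : (domNum K - #X) * domNum H ≤ #D := by
  have hcompl : #(CP.fullParts X)ᶜ = domNum K - #X := by
    have := CP.card_fullParts_le hne hm X
    rw [card_compl, Fintype.card_fin]
    omega
  calc (domNum K - #X) * domNum H = #(CP.fullParts X)ᶜ * domNum H := by rw [hcompl]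
    _ ≤ ∑ w, #(CP.fullParts (fiber D w) ∩ (CP.fullParts X)ᶜ) := CP.card_mul_domNum_le hD _
    _ ≤ ∑ w, #(fiber D w) := sum_le_sum fun w _ => by
      rw [← sdiff_eq_inter_compl]
      exact CP.card_fullParts_sdiff_le hne hm hX _
    _ ≤ #D := sum_card_fiber_le D

theorem mul_card_fullParts_le (hne : ∀ i, (CP.parts i).Nonempty) (hm : m = domNum K + 1)
    {a : ℝ} (ha : 0 ≤ a) (hlarge : ∀ X : Finset V, #X < #(CP.fullParts X) → a ≤ #X)
    (Y : Finset V) : a * #(CP.fullParts Y) ≤ (a + 1) * #Y := by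
  have hY := CP.card_fullParts_le hne hm Y
  by_cases htight : #Y < #(CP.fullParts Y)
  · have hcard : (#(CP.fullParts Y) : ℝ) = #Y + 1 := by exact_mod_cast (by omega : _ = #Y + 1)
    have := hlarge Y htight
    rw [hcard]
    linarith
  · have : (#(CP.fullParts Y) : ℝ) ≤ #Y := by exact_mod_cast (not_lt.1 htight)
    nlinarith [(#Y).cast_nonneg (α := ℝ)]

theorem mul_domNum_le_card (hne : ∀ i, (CP.parts i).Nonempty) (hm : m = domNum K + 1)
    (hD : Dominates (K.boxProd H) ↑D Set.univ) {a : ℝ} (ha : 0 ≤ a)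
    (hlarge : ∀ X : Finset V, #X < #(CP.fullParts X) → a ≤ #X) :
    a * m * domNum H ≤ (a + 1) * #D := by
  have hcount : ((m * domNum H : ℕ) : ℝ) ≤ ∑ w, (#(CP.fullParts (fiber D w)) : ℝ) := by
    have := CP.card_mul_domNum_le hD univ
    simp only [card_univ, Fintype.card_fin, inter_univ] at this
    exact_mod_cast this
  have hfibers : (∑ w, (#(fiber D w) : ℝ)) ≤ #D := by exact_mod_cast sum_card_fiber_le D
  calc a * m * domNum H = a * ((m * domNum H : ℕ) : ℝ) := by push_cast; ring
    _ ≤ ∑ w, a * #(CP.fullParts (fiber D w)) := by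
      rw [← mul_sum]; exact mul_le_mul_of_nonneg_left hcount ha
    _ ≤ ∑ w, (a + 1) * #(fiber D w) :=
      sum_le_sum fun w _ => CP.mul_card_fullParts_le hne hm ha hlarge _
    _ ≤ (a + 1) * #D := by rw [← mul_sum]; exact mul_le_mul_of_nonneg_left hfibers (by linarith)

end CliquePartition

theorem sub_sqrt_domNum_mul_domNum_le_card {V W : Type*} [Fintype V] [Fintype W]
    {K : SimpleGraph V} {H : SimpleGraph W} (hθ : cliqueCoverNum K = domNum K + 1)
    {D : Finset (V × W)} (hD : Dominates (K.boxProd H) ↑D Set.univ) :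
    ((domNum K : ℝ) - √(domNum K)) * domNum H ≤ #D := by
  set k := domNum K
  obtain ⟨CP⟩ : Nonempty (CliquePartition K (k + 1)) :=
    hθ ▸ CliquePartition.nonempty_cliqueCoverNum K
  have hne := CP.parts_nonempty hθ.ge
  have hsqrt : √(k : ℝ) * √(k : ℝ) = k := Real.mul_self_sqrt k.cast_nonneg
  by_cases hsmall : ∃ X : Finset V, #X < #(CP.fullParts X) ∧ (#X : ℝ) < √(k : ℝ)
  · obtain ⟨X, hX, hXsqrt⟩ := hsmall
    have hXle : #X ≤ k := by
      have := card_le_univ (CP.fullParts X)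
      rw [Fintype.card_fin] at this
      omega
    have := CP.sub_card_mul_domNum_le_card hne rfl hD hX
    calc ((k : ℝ) - √(k : ℝ)) * domNum H ≤ ((k - #X : ℕ) : ℝ) * domNum H := by
          rw [Nat.cast_sub hXle]; gcongr
      _ ≤ #D := by exact_mod_cast this
  · push Not at hsmall
    -- `√k` is the threshold balancing the two cases: `(k - √k) (√k + 1) = √k (k - 1)`.
    have := CP.mul_domNum_le_card hne rfl hD (Real.sqrt_nonneg k) hsmall
    have hpos : (0 : ℝ) < √(k : ℝ) + 1 := by positivity
    refine le_of_mul_le_mul_right ?_ hpos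
    push_cast at this
    nlinarith [(domNum H).cast_nonneg (α := ℝ), Real.sqrt_nonneg (k : ℝ)]

/-- Main theorem: for `G ∈ 𝒜₁` and any `H`,
`γ(G □ H) ≥ (γ(G) − √γ(G)) · γ(H)`. -/
theorem stmt6 {V : Type*} [Fintype V] (G : SimpleGraph V) (hG : InA 1 G) :
    ∀ (W : Type) [Fintype W] (H : SimpleGraph W),
      (domNum (G.boxProd H) : ℝ) ≥
        ((domNum G : ℝ) - Real.sqrt (domNum G)) * domNum H := by
  obtain ⟨K, hGK, hγ, hK⟩ := hG
  rw [InD] at hK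
  intro W _ H
  obtain ⟨D, hD, hdom⟩ := exists_dominates_card_eq_domNum (G.boxProd H)
  rw [ge_iff_le, hγ, ← hD]
  exact sub_sqrt_domNum_mul_domNum_le_card hK.1 (hdom.mono_graph (G.boxProd_mono_left hGK H))
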